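/- Let c be a simple-model cost function on the infinite grid graph G with l layers, let r = (x_r, y_r, z_r) and s = (x_s, y_s, z_s) be vertices of G, and for z ∈ {1, …, l} let v_z = (x_s, y_r, z). For each z, let d̄_z denote the minimum cost of a path from r to v_z in the subgraph of G obtained by deleting all horizontal edges on layers 1, …, z−1. Then d̄_l = c_{z_r, l} + c^↔_l·|x_s − x_r|, and for every z ∈ {1, …, l−1}, d̄_z = min{ c_{z_r, z} + c^↔_z·|x_s − x_r|, d̄_{z+1} + c_{z, z+1} }. -/

import Mathlib

/-- Vertices of the infinite grid graph: `(x, y, z)` where `z` is the layer. -/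
abbrev Vtx : Type := ℤ × ℤ × ℤ

/-- Two vertices of the infinite grid graph with layers `1, …, l` are adjacent iff both have
their layer coordinate in `{1, …, l}` and they differ by exactly `1` in exactly one
coordinate.  An edge changing the first coordinate is horizontal, one changing the second
coordinate is vertical, and one changing the third coordinate is a via. -/
def Adj (l : ℤ) (u v : Vtx) : Prop :=
  1 ≤ u.2.2 ∧ u.2.2 ≤ l ∧ 1 ≤ v.2.2 ∧ v.2.2 ≤ l ∧
    |u.1 - v.1| + |u.2.1 - v.2.1| + |u.2.2 - v.2.2| = 1

/-- Simple-model edge cost: a horizontal (resp. vertical) edge on layer `z` costs `ch z`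
(resp. `cv z`) and a via between layers `z` and `z+1` costs `cvia z`. -/
def ecost (ch cv cvia : ℤ → ℝ) (u v : Vtx) : ℝ :=
  if u.1 ≠ v.1 then ch u.2.2
  else if u.2.1 ≠ v.2.1 then cv u.2.2
  else cvia (min u.2.2 v.2.2)

/-- The cost of a walk (given as the list of its vertices) is the sum of its edge costs. -/
def wcost (c : Vtx → Vtx → ℝ) : List Vtx → ℝ
  | [] => 0
  | [_] => 0
  | u :: v :: P => c u v + wcost c (v :: P)

/-- `P` is a walk from `u` to `v` with respect to the adjacency relation `A`. -/
def IsWalkA (A : Vtx → Vtx → Prop) (P : List Vtx) (u v : Vtx) : Prop :=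
  P ≠ [] ∧ P.Chain' A ∧ P.head? = some u ∧ P.getLast? = some v

/-- The distance between two vertices: the infimum cost of a walk between them. -/
noncomputable def gdistA (A : Vtx → Vtx → Prop) (c : Vtx → Vtx → ℝ) (u v : Vtx) : ℝ :=
  sInf { m : ℝ | ∃ P, IsWalkA A P u v ∧ wcost c P = m }

/-- The distance from a vertex to a set of vertices. -/
noncomputable def gdistSetA (A : Vtx → Vtx → Prop) (c : Vtx → Vtx → ℝ) (u : Vtx)
    (T : Set Vtx) : ℝ :=
  sInf { m : ℝ | ∃ P v, v ∈ T ∧ IsWalkA A P u v ∧ wcost c P = m }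

/-- `cviaSum cvia z z'` is the total cost of a stack of vias between layers `z` and `z'`,
i.e. `Σ_{ζ = min z z'}^{max z z' − 1} cvia ζ` (symmetric in `z` and `z'`). -/
noncomputable def cviaSum (cvia : ℤ → ℝ) (z z' : ℤ) : ℝ :=
  ∑ ζ ∈ Finset.Icc (min z z') (max z z' - 1), cvia ζ

/-- Adjacency in the subgraph of the grid graph with `l` layers obtained by deleting all
horizontal edges on the layers `1, …, z₀ − 1`. -/
def AdjNH (l z₀ : ℤ) (u v : Vtx) : Prop :=
  Adj l u v ∧ (u.1 ≠ v.1 → z₀ ≤ u.2.2)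

/-!
Write `d(u)` for the minimum over layers `z₀ ≤ z ≤ l` of `c_{z_u,z} + c↔_z·|x_s − x_u| + c_{z,z₀}`:
the cost of going from `u` by vias to layer `z`, horizontally to column `x_s`, and by vias to
`z₀`. Such walks exist in the subgraph without horizontal edges below `z₀`, so `d̄_{z₀} ≤ d(r)`.
Conversely `d` is a potential: across any edge of that subgraph it drops by at most the edge
cost. Vertical edges do not change it, via edges are handled by the triangle inequality for
`c_{·,·}`, and for a horizontal edge on layer `z_u ≥ z₀` either the bend layer chosen for the
other endpoint is at most as expensive as `z_u`, or bending at `z_u` itself is cheaper. Since `d`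
vanishes at the target, every walk costs at least `d(r)`. Both recursions then follow by
splitting the term `z = z₀` off the minimum, because `c_{z,z₀} = c_{z,z₀+1} + c_{z₀,z₀+1}` for
`z > z₀`.
-/

open Finset

section Walks

variable {A : Vtx → Vtx → Prop} {c : Vtx → Vtx → ℝ}

theorem IsWalkA.cons {P : List Vtx} {u v w : Vtx} (hP : IsWalkA A P u v) (h : A w u) :
    IsWalkA A (w :: P) w v := by
  obtain ⟨hne, hch, hu, hv⟩ := hP
  obtain ⟨u', P, rfl⟩ := List.exists_cons_of_ne_nil hne
  obtain rfl : u' = u := Option.some_injective _ hu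
  exact ⟨List.cons_ne_nil _ _, hch.cons_cons h, rfl, by rwa [List.getLast?_cons_cons]⟩

theorem wcost_cons_of_head? {P : List Vtx} {u : Vtx} (hu : P.head? = some u) (w : Vtx) :
    wcost c (w :: P) = c w u + wcost c P := by
  obtain ⟨P, rfl⟩ : ∃ Q, P = u :: Q := by
    cases P <;> simp_all
  rfl

theorem sub_le_wcost_of_isWalkA (f : Vtx → ℝ) (hf : ∀ u v, A u v → f u ≤ c u v + f v) :
    ∀ (P : List Vtx) (u v : Vtx), IsWalkA A P u v → f u - f v ≤ wcost c P
  | [], _, _, h => absurd rfl h.1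
  | [a], u, v, ⟨_, _, hu, hv⟩ => by
    obtain rfl : a = u := by simpa using hu
    obtain rfl : a = v := by simpa using hv
    simp [wcost]
  | a :: b :: P, u, v, ⟨_, hch, hu, hv⟩ => by
    obtain rfl : a = u := by simpa using hu
    have hrest : IsWalkA A (b :: P) b v :=
      ⟨List.cons_ne_nil _ _, hch.tail, rfl, by rwa [List.getLast?_cons_cons] at hv⟩
    have hedge := hf a b (List.isChain_cons_cons.1 hch).1
    have hP := sub_le_wcost_of_isWalkA f hf (b :: P) b v hrest
    simp only [wcost]
    linarith

theorem gdistA_eq_of_potential (f : Vtx → ℝ) (hf : ∀ u v, A u v → f u ≤ c u v + f v)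
    {P : List Vtx} {u v : Vtx} (hP : IsWalkA A P u v) (hcost : wcost c P = f u - f v) :
    gdistA A c u v = f u - f v :=
  IsLeast.csInf_eq ⟨⟨P, hP, hcost⟩, by
    rintro _ ⟨Q, hQ, rfl⟩
    exact sub_le_wcost_of_isWalkA f hf Q u v hQ⟩

theorem IsWalkA.exists_prepend_steps (p : ℤ → Vtx) (g : ℤ → ℝ) {a b : ℤ} (hab : a ≤ b)
    (hstep : ∀ i, a ≤ i → i < b → A (p i) (p (i + 1)) ∧ c (p i) (p (i + 1)) = g i - g (i + 1))
    {Q : List Vtx} {w : Vtx} (hQ : IsWalkA A Q (p b) w) :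
    ∃ P, IsWalkA A P (p a) w ∧ wcost c P = g a - g b + wcost c Q := by
  induction a, hab using Int.leInductionDown with
  | base => exact ⟨Q, hQ, by ring⟩
  | pred a hab ih =>
    obtain ⟨P, hP, hcost⟩ := ih fun i hi hib => hstep i (by omega) hib
    obtain ⟨hA, hc⟩ := hstep (a - 1) le_rfl (by omega)
    rw [sub_add_cancel] at hA hc
    refine ⟨p (a - 1) :: P, hP.cons hA, ?_⟩
    rw [wcost_cons_of_head? hP.2.2.1, hc, hcost]
    ring

end Walks

theorem Finset.inf'_le_add_inf' {ι α : Type*} [LinearOrder α] [Add α] {s : Finset ι}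
    (hs : s.Nonempty) {f g : ι → α} {c : α} (h : ∀ j ∈ s, ∃ i ∈ s, f i ≤ c + g j) :
    s.inf' hs f ≤ c + s.inf' hs g := by
  obtain ⟨j, hj, hg⟩ := s.exists_mem_eq_inf' hs g
  obtain ⟨i, hi, hfi⟩ := h j hj
  rw [hg]
  exact (inf'_le f hi).trans hfi

section ViaSums

variable {cvia : ℤ → ℝ}

theorem cviaSum_comm (cvia : ℤ → ℝ) (a b : ℤ) : cviaSum cvia a b = cviaSum cvia b a := by
  rw [cviaSum, cviaSum, min_comm, max_comm]

@[simp]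
theorem cviaSum_self (cvia : ℤ → ℝ) (a : ℤ) : cviaSum cvia a a = 0 := by
  simp [cviaSum]

theorem cviaSum_add_one (cvia : ℤ → ℝ) (a : ℤ) : cviaSum cvia a (a + 1) = cvia a := by
  simp [cviaSum]

theorem cviaSum_nonneg {l : ℤ} (hcvia : ∀ z, 1 ≤ z → z < l → 0 ≤ cvia z) {a b : ℤ}
    (ha : 1 ≤ a) (hb : 1 ≤ b) (hal : a ≤ l) (hbl : b ≤ l) : 0 ≤ cviaSum cvia a b :=
  sum_nonneg fun ζ hζ => by
    rw [mem_Icc] at hζ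
    exact hcvia ζ (by omega) (by omega)

noncomputable def viaPrefix (cvia : ℤ → ℝ) (z : ℤ) : ℝ := ∑ ζ ∈ Ico 1 z, cvia ζ

theorem viaPrefix_add_one {z : ℤ} (hz : 1 ≤ z) :
    viaPrefix cvia (z + 1) = viaPrefix cvia z + cvia z :=
  (sum_Ico_add_eq_sum_Ico_add_one hz cvia).symm

theorem cviaSum_eq_viaPrefix_sub {a b : ℤ} (ha : 1 ≤ a) (hab : a ≤ b) :
    cviaSum cvia a b = viaPrefix cvia b - viaPrefix cvia a := by
  rw [cviaSum, min_eq_left hab, max_eq_right hab, Icc_sub_one_right_eq_Ico, viaPrefix, viaPrefix,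
    eq_sub_iff_add_eq', ← sum_union (Ico_disjoint_Ico_consecutive 1 a b),
    Ico_union_Ico_eq_Ico ha hab]

theorem cviaSum_eq_abs {l : ℤ} (hcvia : ∀ z, 1 ≤ z → z < l → 0 ≤ cvia z) {a b : ℤ}
    (ha : 1 ≤ a) (hb : 1 ≤ b) (hal : a ≤ l) (hbl : b ≤ l) :
    cviaSum cvia a b = |viaPrefix cvia b - viaPrefix cvia a| := by
  rcases le_total a b with hab | hba
  · rw [← cviaSum_eq_viaPrefix_sub ha hab, abs_of_nonneg (cviaSum_nonneg hcvia ha hb hal hbl)]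
  · rw [abs_sub_comm, ← cviaSum_eq_viaPrefix_sub hb hba, cviaSum_comm,
      abs_of_nonneg (cviaSum_nonneg hcvia hb ha hbl hal)]

theorem cviaSum_le_add {l : ℤ} (hcvia : ∀ z, 1 ≤ z → z < l → 0 ≤ cvia z) {a b c : ℤ}
    (ha : 1 ≤ a) (hb : 1 ≤ b) (hc : 1 ≤ c) (hal : a ≤ l) (hbl : b ≤ l) (hcl : c ≤ l) :
    cviaSum cvia a c ≤ cviaSum cvia a b + cviaSum cvia b c := by
  rw [cviaSum_eq_abs hcvia ha hc hal hcl, cviaSum_eq_abs hcvia ha hb hal hbl,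
    cviaSum_eq_abs hcvia hb hc hbl hcl, add_comm]
  exact abs_sub_le _ _ _

end ViaSums

section GridWalks

variable {l z₀ : ℤ} {ch cv cvia : ℤ → ℝ}

theorem IsWalkA.exists_prepend_vias {x y a b : ℤ} (ha : 1 ≤ a) (hb : 1 ≤ b) (hal : a ≤ l)
    (hbl : b ≤ l) {Q : List Vtx} {w : Vtx} (hQ : IsWalkA (AdjNH l z₀) Q (x, y, b) w) :
    ∃ P, IsWalkA (AdjNH l z₀) P (x, y, a) w ∧
      wcost (ecost ch cv cvia) P = cviaSum cvia a b + wcost (ecost ch cv cvia) Q := by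
  rcases le_total a b with hab | hba
  · obtain ⟨P, hP, hcost⟩ :=
      hQ.exists_prepend_steps (c := ecost ch cv cvia) (fun i => (x, y, i))
        (fun i => -viaPrefix cvia i) hab fun i hai hib =>
          ⟨by simp [AdjNH, Adj]; omega, by simp [ecost, viaPrefix_add_one (by omega : 1 ≤ i)]⟩
    refine ⟨P, hP, ?_⟩
    rw [hcost, cviaSum_eq_viaPrefix_sub ha hab]
    ring
  · -- walk down the column by indexing it with `-i`
    obtain ⟨P, hP, hcost⟩ :=
      (neg_neg b ▸ hQ).exists_prepend_steps (c := ecost ch cv cvia) (fun i => (x, y, -i))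
        (fun i => viaPrefix cvia (-i)) (neg_le_neg hba) fun i hai hib => by
          have hS := viaPrefix_add_one (cvia := cvia) (by omega : 1 ≤ -i - 1)
          rw [sub_add_cancel] at hS
          exact ⟨by simp [AdjNH, Adj]; omega, by simp [ecost, hS]; ring_nf⟩
    refine ⟨P, neg_neg a ▸ hP, ?_⟩
    rw [hcost, cviaSum_comm, cviaSum_eq_viaPrefix_sub hb hba, neg_neg, neg_neg]

theorem IsWalkA.exists_prepend_horizontal {x x' y z : ℤ} (hz₀ : z₀ ≤ z) (hz : 1 ≤ z)
    (hzl : z ≤ l) {Q : List Vtx} {w : Vtx} (hQ : IsWalkA (AdjNH l z₀) Q (x', y, z) w) :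
    ∃ P, IsWalkA (AdjNH l z₀) P (x, y, z) w ∧
      wcost (ecost ch cv cvia) P = ch z * |(x' : ℝ) - x| + wcost (ecost ch cv cvia) Q := by
  rcases le_total x x' with hxx | hxx
  · obtain ⟨P, hP, hcost⟩ :=
      hQ.exists_prepend_steps (c := ecost ch cv cvia) (fun i => (i, y, z)) (fun i => -(ch z * i))
        hxx fun i hxi hix => ⟨by simp [AdjNH, Adj]; omega, by simp [ecost]; ring⟩
    refine ⟨P, hP, ?_⟩
    rw [hcost, abs_of_nonneg (by simpa using hxx)]
    ring
  · obtain ⟨P, hP, hcost⟩ :=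
      (neg_neg x' ▸ hQ).exists_prepend_steps (c := ecost ch cv cvia) (fun i => (-i, y, z))
        (fun i => -(ch z * i)) (neg_le_neg hxx) fun i hxi hix =>
          ⟨by simp [AdjNH, Adj]; omega, by simp [ecost]; ring⟩
    refine ⟨P, neg_neg x ▸ hP, ?_⟩
    rw [hcost, abs_of_nonpos (by simpa using hxx)]
    push_cast
    ring

end GridWalks

section RouteCost

variable {l z₀ : ℤ} {ch cv cvia : ℤ → ℝ}

theorem cviaSum_of_abs_sub_eq_one (cvia : ℤ → ℝ) {a b : ℤ} (h : |a - b| = 1) :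
    cviaSum cvia a b = cvia (min a b) := by
  rcases abs_eq (zero_le_one' ℤ) |>.1 h with h | h
  · rw [cviaSum_comm, show a = b + 1 by omega, cviaSum_add_one, min_eq_right (by omega)]
  · rw [show b = a + 1 by omega, cviaSum_add_one, min_eq_left (by omega)]

/-- The cost of the walk from `u` that goes by vias to layer `z`, horizontally to column `xs`,
and by vias to layer `z₀`. -/
noncomputable def routeCost (ch cvia : ℤ → ℝ) (xs z₀ : ℤ) (u : Vtx) (z : ℤ) : ℝ :=
  cviaSum cvia u.2.2 z + ch z * |(xs : ℝ) - u.1| + cviaSum cvia z z₀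

noncomputable def minRouteCost (l : ℤ) (ch cvia : ℤ → ℝ) (xs z₀ : ℤ) (h : z₀ ≤ l) (u : Vtx) :
    ℝ :=
  (Icc z₀ l).inf' (nonempty_Icc.2 h) (routeCost ch cvia xs z₀ u)

theorem exists_isWalkA_wcost_eq_routeCost {xs z : ℤ} {u : Vtx} (hu : 1 ≤ u.2.2)
    (hul : u.2.2 ≤ l) (h₀ : 1 ≤ z₀) (hz : z ∈ Icc z₀ l) :
    ∃ P, IsWalkA (AdjNH l z₀) P u (xs, u.2.1, z₀) ∧
      wcost (ecost ch cv cvia) P = routeCost ch cvia xs z₀ u z := by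
  rw [mem_Icc] at hz
  have hnil : IsWalkA (AdjNH l z₀) [(xs, u.2.1, z₀)] (xs, u.2.1, z₀) (xs, u.2.1, z₀) :=
    ⟨List.cons_ne_nil _ _, List.isChain_singleton _, rfl, rfl⟩
  obtain ⟨P₁, hP₁, hc₁⟩ := hnil.exists_prepend_vias (ch := ch) (cv := cv) (cvia := cvia)
    (a := z) (by omega) h₀ hz.2 (by omega)
  obtain ⟨P₂, hP₂, hc₂⟩ := hP₁.exists_prepend_horizontal (ch := ch) (cv := cv) (cvia := cvia)
    (x := u.1) hz.1 (by omega) hz.2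
  obtain ⟨P₃, hP₃, hc₃⟩ := hP₂.exists_prepend_vias (ch := ch) (cv := cv) (cvia := cvia)
    hu (by omega) hul hz.2
  refine ⟨P₃, hP₃, ?_⟩
  rw [hc₃, hc₂, hc₁, routeCost]
  simp only [wcost]
  ring

theorem exists_routeCost_le_of_adjNH (hch : ∀ z, 1 ≤ z → z ≤ l → 0 ≤ ch z)
    (hcv : ∀ z, 1 ≤ z → z ≤ l → 0 ≤ cv z) (hcvia : ∀ z, 1 ≤ z → z < l → 0 ≤ cvia z)
    (h₀ : 1 ≤ z₀) (xs : ℤ) {u v : Vtx} (huv : AdjNH l z₀ u v) {z : ℤ} (hz : z ∈ Icc z₀ l) :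
    ∃ z' ∈ Icc z₀ l,
      routeCost ch cvia xs z₀ u z' ≤ ecost ch cv cvia u v + routeCost ch cvia xs z₀ v z := by
  obtain ⟨x, y, zu⟩ := u
  obtain ⟨x', y', zv⟩ := v
  obtain ⟨⟨hu, hul, hv, hvl, hadj⟩, hNH⟩ := huv
  rw [mem_Icc] at hz
  simp only at hadj hNH hu hul hv hvl ⊢
  rcases (by simp only [Int.abs_eq_natAbs] at hadj ⊢; omega :
      (y = y' ∧ zu = zv ∧ |x - x'| = 1) ∨ (x = x' ∧ zu = zv ∧ y ≠ y') ∨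
        (x = x' ∧ y = y' ∧ |zu - zv| = 1)) with
    ⟨rfl, rfl, hx⟩ | ⟨rfl, rfl, hy⟩ | ⟨rfl, rfl, hzz⟩
  · have hxx : x ≠ x' := by rintro rfl; simp at hx
    have hdist : |(xs : ℝ) - x| ≤ |(xs : ℝ) - x'| + 1 := by
      have : |(x' : ℝ) - x| = 1 := by rw [abs_sub_comm]; exact_mod_cast hx
      linarith [abs_sub_le (xs : ℝ) x' x]
    rw [show ecost ch cv cvia (x, y, zu) (x', y, zu) = ch zu from if_pos hxx]
    rcases le_total (ch z) (ch zu) with hcz | hcz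
    · refine ⟨z, mem_Icc.2 hz, ?_⟩
      have := mul_le_mul_of_nonneg_left hdist (hch z (by omega) hz.2)
      simp only [routeCost]
      linarith
    · refine ⟨zu, mem_Icc.2 ⟨hNH hxx, hul⟩, ?_⟩
      have := mul_le_mul_of_nonneg_left hdist (hch zu hu hul)
      have := mul_le_mul_of_nonneg_right hcz (abs_nonneg ((xs : ℝ) - x'))
      have := cviaSum_le_add hcvia hu (by omega) h₀ hul hz.2 (by omega) (a := zu) (b := z)
        (c := z₀)
      simp only [routeCost, cviaSum_self]
      linarith
  · refine ⟨z, mem_Icc.2 hz, ?_⟩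
    have hec : ecost ch cv cvia (x, y, zu) (x, y', zu) = cv zu := by simp [ecost, hy]
    simp only [routeCost, hec]
    linarith [hcv zu hu hul]
  · refine ⟨z, mem_Icc.2 hz, ?_⟩
    have hec : ecost ch cv cvia (x, y, zu) (x, y, zv) = cviaSum cvia zu zv := by
      simp [ecost, cviaSum_of_abs_sub_eq_one cvia hzz]
    have := cviaSum_le_add hcvia hu hv (by omega) hul hvl hz.2 (a := zu) (b := zv) (c := z)
    simp only [routeCost, hec]
    linarith

end RouteCost

section Distance

variable {l z₀ : ℤ} {ch cv cvia : ℤ → ℝ}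

theorem minRouteCost_le_ecost_add (hch : ∀ z, 1 ≤ z → z ≤ l → 0 ≤ ch z)
    (hcv : ∀ z, 1 ≤ z → z ≤ l → 0 ≤ cv z) (hcvia : ∀ z, 1 ≤ z → z < l → 0 ≤ cvia z)
    (h₀ : 1 ≤ z₀) (h : z₀ ≤ l) (xs : ℤ) {u v : Vtx} (huv : AdjNH l z₀ u v) :
    minRouteCost l ch cvia xs z₀ h u ≤ ecost ch cv cvia u v + minRouteCost l ch cvia xs z₀ h v :=
  inf'_le_add_inf' _ fun _ hz => exists_routeCost_le_of_adjNH hch hcv hcvia h₀ xs huv hz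

theorem minRouteCost_target (hcvia : ∀ z, 1 ≤ z → z < l → 0 ≤ cvia z) (h₀ : 1 ≤ z₀)
    (h : z₀ ≤ l) (xs y : ℤ) :
    minRouteCost l ch cvia xs z₀ h (xs, y, z₀) = 0 := by
  refine le_antisymm ((inf'_le _ (mem_Icc.2 ⟨le_rfl, h⟩)).trans_eq (by simp [routeCost]))
    (le_inf' _ _ fun z hz => ?_)
  rw [mem_Icc] at hz
  simp only [routeCost, sub_self, abs_zero, mul_zero, add_zero]
  exact add_nonneg (cviaSum_nonneg hcvia h₀ (by omega) h hz.2)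
    (cviaSum_nonneg hcvia (by omega) h₀ hz.2 h)

theorem gdistA_eq_minRouteCost (hch : ∀ z, 1 ≤ z → z ≤ l → 0 ≤ ch z)
    (hcv : ∀ z, 1 ≤ z → z ≤ l → 0 ≤ cv z) (hcvia : ∀ z, 1 ≤ z → z < l → 0 ≤ cvia z)
    (h₀ : 1 ≤ z₀) (h : z₀ ≤ l) {r : Vtx} (hr : 1 ≤ r.2.2) (hrl : r.2.2 ≤ l) (xs : ℤ) :
    gdistA (AdjNH l z₀) (ecost ch cv cvia) r (xs, r.2.1, z₀) =
      minRouteCost l ch cvia xs z₀ h r := by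
  obtain ⟨z, hz, hmin⟩ :=
    (Icc z₀ l).exists_mem_eq_inf' (nonempty_Icc.2 h) (routeCost ch cvia xs z₀ r)
  obtain ⟨P, hP, hcost⟩ :=
    exists_isWalkA_wcost_eq_routeCost (ch := ch) (cv := cv) (cvia := cvia) (xs := xs) hr hrl h₀ hz
  rw [gdistA_eq_of_potential (minRouteCost l ch cvia xs z₀ h)
      (fun _ _ => minRouteCost_le_ecost_add hch hcv hcvia h₀ h xs) hP
      (by rw [minRouteCost_target hcvia h₀ h, sub_zero, hcost, minRouteCost, hmin]),
    minRouteCost_target hcvia h₀ h, sub_zero]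

theorem minRouteCost_top (xs : ℤ) (u : Vtx) :
    minRouteCost l ch cvia xs l le_rfl u = cviaSum cvia u.2.2 l + ch l * |(xs : ℝ) - u.1| := by
  simp [minRouteCost, routeCost]

theorem minRouteCost_eq_min {z : ℤ} (hz : 1 ≤ z) (hzl : z < l) (xs : ℤ) (u : Vtx) :
    minRouteCost l ch cvia xs z hzl.le u = min (cviaSum cvia u.2.2 z + ch z * |(xs : ℝ) - u.1|)
      (minRouteCost l ch cvia xs (z + 1) hzl u + cvia z) := by
  have hshift : ∀ z' ∈ Icc (z + 1) l,
      routeCost ch cvia xs z u z' = routeCost ch cvia xs (z + 1) u z' + cvia z := by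
    intro z' hz'
    rw [mem_Icc] at hz'
    have := cviaSum_eq_viaPrefix_sub (cvia := cvia) hz (by omega : z ≤ z')
    have := cviaSum_eq_viaPrefix_sub (cvia := cvia) (by omega : 1 ≤ z + 1) hz'.1
    have := viaPrefix_add_one (cvia := cvia) hz
    simp only [routeCost, cviaSum_comm cvia z']
    linarith
  have hsplit : Icc z l = insert z (Icc (z + 1) l) := (insert_Icc_add_one_left_eq_Icc hzl.le).symm
  have hne : (Icc (z + 1) l).Nonempty := nonempty_Icc.2 hzl
  simp only [minRouteCost, hsplit]
  rw [inf'_insert hne, inf'_congr hne rfl hshift,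
    apply_inf'_eq_inf'_comp hne (· + cvia z) fun a b => (min_add_add_right a b _).symm]
  simp [routeCost, Function.comp_def]

end Distance

theorem stmt3_general (l : ℤ) (hl : 1 ≤ l) (ch cv cvia : ℤ → ℝ)
    (hch : ∀ z, 1 ≤ z → z ≤ l → 0 < ch z)
    (hcv : ∀ z, 1 ≤ z → z ≤ l → 0 < cv z)
    (hcvia : ∀ z, 1 ≤ z → z < l → 0 < cvia z)
    (r s : Vtx) (hr : 1 ≤ r.2.2 ∧ r.2.2 ≤ l) :
    gdistA (AdjNH l l) (ecost ch cv cvia) r (s.1, r.2.1, l)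
        = cviaSum cvia r.2.2 l + ch l * |(s.1 : ℝ) - (r.1 : ℝ)| ∧
      ∀ z : ℤ, 1 ≤ z → z < l →
        gdistA (AdjNH l z) (ecost ch cv cvia) r (s.1, r.2.1, z)
          = min (cviaSum cvia r.2.2 z + ch z * |(s.1 : ℝ) - (r.1 : ℝ)|)
              (gdistA (AdjNH l (z + 1)) (ecost ch cv cvia) r (s.1, r.2.1, z + 1) + cvia z) := by
  have hdist : ∀ z₀ (h₀ : 1 ≤ z₀) (h : z₀ ≤ l),
      gdistA (AdjNH l z₀) (ecost ch cv cvia) r (s.1, r.2.1, z₀) =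
        minRouteCost l ch cvia s.1 z₀ h r := fun z₀ h₀ h =>
    gdistA_eq_minRouteCost (fun z h₁ h₂ => (hch z h₁ h₂).le) (fun z h₁ h₂ => (hcv z h₁ h₂).le)
      (fun z h₁ h₂ => (hcvia z h₁ h₂).le) h₀ h hr.1 hr.2 s.1
  refine ⟨by rw [hdist l hl le_rfl, minRouteCost_top], fun z hz hzl => ?_⟩
  rw [hdist z hz hzl.le, hdist (z + 1) (by omega) hzl, minRouteCost_eq_min hz hzl]

/-- With `v_z = (x_s, y_r, z)` and `d̄_z` the distance from `r` to `v_z` in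
the subgraph without horizontal edges on layers `1, …, z−1`, we have
`d̄_l = c_{z_r,l} + c↔_l·|x_s − x_r|` and
`d̄_z = min (c_{z_r,z} + c↔_z·|x_s − x_r|) (d̄_{z+1} + c_{z,z+1})` for `1 ≤ z < l`. -/
theorem stmt3 (l : ℤ) (hl : 1 ≤ l) (ch cv cvia : ℤ → ℝ)
    (hch : ∀ z, 1 ≤ z → z ≤ l → 0 < ch z)
    (hcv : ∀ z, 1 ≤ z → z ≤ l → 0 < cv z)
    (hcvia : ∀ z, 1 ≤ z → z < l → 0 < cvia z)
    (r s : Vtx) (hr : 1 ≤ r.2.2 ∧ r.2.2 ≤ l) (hs : 1 ≤ s.2.2 ∧ s.2.2 ≤ l) :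
    gdistA (AdjNH l l) (ecost ch cv cvia) r (s.1, r.2.1, l)
        = cviaSum cvia r.2.2 l + ch l * |(s.1 : ℝ) - (r.1 : ℝ)| ∧
      ∀ z : ℤ, 1 ≤ z → z < l →
        gdistA (AdjNH l z) (ecost ch cv cvia) r (s.1, r.2.1, z)
          = min (cviaSum cvia r.2.2 z + ch z * |(s.1 : ℝ) - (r.1 : ℝ)|)
              (gdistA (AdjNH l (z + 1)) (ecost ch cv cvia) r (s.1, r.2.1, z + 1) + cvia z) :=
  stmt3_general l hl ch cv cvia hch hcv hcvia r s hr
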